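/- arXiv:2501.13039 — 5 statements merged into one kernel-verified Lean document; each statement's English description precedes it below -/
import Mathlib

section
/- Let 𝒞 be a C*-algebra, let 𝒜 and ℬ be C*-subalgebras of 𝒞, and let Ω be a nonempty compact Hausdorff space. Then d_KK(𝒜, ℬ) ≤ d_KK(C(Ω, 𝒜), C(Ω, ℬ)), where C(Ω, 𝒜) and C(Ω, ℬ) are viewed as C*-subalgebras of C(Ω, 𝒞). -/
/-!
Constant functions embed `𝒞` isometrically into `C(Ω, 𝒞)`, carrying the unit ball of `𝒜` into
that of `C(Ω, 𝒜)`, and evaluation at a point of `Ω` is a `1`-Lipschitz left inverse carrying the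
unit ball of `C(Ω, ℬ)` into that of `ℬ`. Hence the distance from `x` to the unit ball of `ℬ` is at
most the distance from the constant function `x` to the unit ball of `C(Ω, ℬ)`, and the same holds
with `𝒜` and `ℬ` exchanged.
-/

open Metric

/-- The Kadison–Kastler distance between two subsets of a normed space: the Hausdorff-type
distance between their closed unit balls. -/
noncomputable def dKK {X : Type*} [NormedAddCommGroup X] (A B : Set X) : ℝ :=
  max (⨆ x : ↥(A ∩ closedBall (0 : X) 1), infDist (x : X) (B ∩ closedBall (0 : X) 1))
      (⨆ y : ↥(B ∩ closedBall (0 : X) 1), infDist (y : X) (A ∩ closedBall (0 : X) 1))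

/-- `C(Ω, 𝒜)` viewed as a subset of `C(Ω, 𝒞)`: the continuous functions with values in `𝒜`. -/
def contValIn {Ω C : Type*} [TopologicalSpace Ω] [TopologicalSpace C]
    (A : Set C) : Set C(Ω, C) :=
  {f | ∀ t, f t ∈ A}

open Set

section Retraction

variable {X Y : Type*} [PseudoMetricSpace X] [PseudoMetricSpace Y]

lemma LipschitzWith.infDist_apply_le_infDist_of_mapsTo {π : Y → X} (hπ : LipschitzWith 1 π)
    {T : Set X} {T' : Set Y} (hT : MapsTo π T' T) (hT' : T'.Nonempty) (y : Y) :
    infDist (π y) T ≤ infDist y T' :=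
  (le_infDist hT').2 fun z hz =>
    (infDist_le_dist_of_mem (hT hz)).trans (by simpa using hπ.dist_le_mul y z)

lemma iSup_infDist_le_iSup_infDist_of_leftInverse {S T : Set X} {S' T' : Set Y}
    {φ : X → Y} {π : Y → X} (hπ : LipschitzWith 1 π) (hπφ : Function.LeftInverse π φ)
    (hS : MapsTo φ S S') (hT : MapsTo π T' T) (hT' : T'.Nonempty)
    (hbdd : BddAbove (range fun y : S' => infDist (y : Y) T')) :
    ⨆ x : S, infDist (x : X) T ≤ ⨆ y : S', infDist (y : Y) T' := by
  refine Real.iSup_le (fun x => ?_) (Real.iSup_nonneg fun _ => infDist_nonneg)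
  calc infDist (x : X) T = infDist (π (φ x)) T := by rw [hπφ]
    _ ≤ infDist (φ x) T' := hπ.infDist_apply_le_infDist_of_mapsTo hT hT' _
    _ ≤ ⨆ y : S', infDist (y : Y) T' := le_ciSup hbdd ⟨φ x, hS x.2⟩

end Retraction

section ContinuousMap

variable {X : Type*} [SeminormedAddCommGroup X]
  {Ω : Type*} [TopologicalSpace Ω] [CompactSpace Ω]

lemma ContinuousMap.const_mapsTo_contValIn_inter_closedBall (A : Set X) :
    MapsTo (ContinuousMap.const Ω) (A ∩ closedBall 0 1)
      (contValIn A ∩ closedBall (0 : C(Ω, X)) 1) := fun x ⟨hxA, hx⟩ =>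
  ⟨fun _ => hxA, by
    rw [mem_closedBall_zero_iff] at hx ⊢
    exact (ContinuousMap.norm_le _ zero_le_one).2 fun _ => hx⟩

lemma ContinuousMap.eval_mapsTo_inter_closedBall (B : Set X) (t : Ω) :
    MapsTo (fun f : C(Ω, X) => f t) (contValIn B ∩ closedBall 0 1)
      (B ∩ closedBall 0 1) := fun f ⟨hfB, hf⟩ =>
  ⟨hfB t, by
    rw [mem_closedBall_zero_iff] at hf ⊢
    exact (f.norm_coe_le_norm t).trans hf⟩

lemma ContinuousMap.lipschitzWith_eval (t : Ω) : LipschitzWith 1 fun f : C(Ω, X) => f t :=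
  LipschitzWith.of_dist_le_mul fun f g => by simpa using f.dist_apply_le_dist t

lemma bddAbove_range_infDist_of_zero_mem {S T : Set X} (hT : (0 : X) ∈ T) :
    BddAbove (range fun x : ↥(S ∩ closedBall 0 1) => infDist (x : X) T) := by
  refine ⟨1, ?_⟩
  rintro _ ⟨x, rfl⟩
  exact (infDist_le_dist_of_mem hT).trans (mem_closedBall.1 x.2.2)

lemma iSup_infDist_le_iSup_infDist_contValIn [Nonempty Ω] (A B : Set X) (hB : (0 : X) ∈ B) :
    ⨆ x : ↥(A ∩ closedBall 0 1), infDist (x : X) (B ∩ closedBall 0 1) ≤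
      ⨆ f : ↥(contValIn (Ω := Ω) A ∩ closedBall 0 1),
        infDist (f : C(Ω, X)) (contValIn B ∩ closedBall 0 1) := by
  have hB' : (0 : C(Ω, X)) ∈ contValIn B ∩ closedBall 0 1 :=
    ⟨fun _ => hB, mem_closedBall_self zero_le_one⟩
  exact iSup_infDist_le_iSup_infDist_of_leftInverse
    (ContinuousMap.lipschitzWith_eval (Classical.arbitrary Ω)) (fun _ => rfl)
    (ContinuousMap.const_mapsTo_contValIn_inter_closedBall A)
    (ContinuousMap.eval_mapsTo_inter_closedBall B _) ⟨0, hB'⟩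
    (bddAbove_range_infDist_of_zero_mem hB')

end ContinuousMap

theorem dKK_le_dKK_contMap_general
    {C : Type*} [NonUnitalNormedRing C] [StarRing C] [NormedSpace ℂ C]
    (Ω : Type*) [TopologicalSpace Ω] [CompactSpace Ω] [Nonempty Ω]
    (A B : NonUnitalStarSubalgebra ℂ C) :
    dKK (A : Set C) (B : Set C) ≤
      dKK (contValIn (Ω := Ω) (A : Set C)) (contValIn (Ω := Ω) (B : Set C)) :=
  max_le_max (iSup_infDist_le_iSup_infDist_contValIn _ _ B.zero_mem)
    (iSup_infDist_le_iSup_infDist_contValIn _ _ A.zero_mem)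

/-- For C*-subalgebras `𝒜, ℬ` of a C*-algebra `𝒞` and a nonempty compact Hausdorff space `Ω`,
`d_KK(𝒜, ℬ) ≤ d_KK(C(Ω, 𝒜), C(Ω, ℬ))`. -/
theorem dKK_le_dKK_contMap
    {C : Type*} [NonUnitalNormedRing C] [StarRing C] [CStarRing C] [NormedSpace ℂ C]
    [IsScalarTower ℂ C C] [SMulCommClass ℂ C C] [StarModule ℂ C] [CompleteSpace C]
    (Ω : Type*) [TopologicalSpace Ω] [CompactSpace Ω] [T2Space Ω] [Nonempty Ω]
    (A B : NonUnitalStarSubalgebra ℂ C)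
    (hA : IsClosed (A : Set C)) (hB : IsClosed (B : Set C)) :
    dKK (A : Set C) (B : Set C) ≤
      dKK (contValIn (Ω := Ω) (A : Set C)) (contValIn (Ω := Ω) (B : Set C)) :=
  dKK_le_dKK_contMap_general Ω A B
end

section
/- Let 𝒞 be a C*-algebra, let 𝒜 and ℬ be finite-dimensional *-subalgebras of 𝒞, and let Ω be a nonempty locally compact Hausdorff space. Then d_KK(𝒜, ℬ) ≤ d_KK(C₀(Ω, 𝒜), C₀(Ω, ℬ)), where C₀(Ω, 𝒜) and C₀(Ω, ℬ) are viewed as C*-subalgebras of C₀(Ω, 𝒞). -/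
open Metric
open scoped ZeroAtInfty

/-- `C₀(Ω, 𝒜)` viewed as a subset of `C₀(Ω, 𝒞)`: the continuous functions vanishing at infinity
with values in `𝒜`. -/
def c0ValIn {Ω C : Type*} [TopologicalSpace Ω] [NormedAddCommGroup C]
    (A : Set C) : Set C₀(Ω, C) :=
  {f | ∀ t, f t ∈ A}

/-!
Evaluation at a point `t₀ ∈ Ω` is a contraction `C₀(Ω, 𝒞) → 𝒞` mapping `C₀(Ω, ℬ)` into `ℬ`, so the
distance from `f t₀` to the unit ball of `ℬ` is at most the distance from `f` to the unit ball of
`C₀(Ω, ℬ)`. Conversely, every `a` in the unit ball of `𝒜` is the value at `t₀` of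
`t ↦ φ t • a ∈ C₀(Ω, 𝒜)`, where `φ` is an Urysohn bump with `φ t₀ = 1` and `0 ≤ φ ≤ 1`, and this
function again lies in the unit ball. Hence each of the two suprema defining `d_KK(𝒜, ℬ)` is
dominated by the corresponding supremum for `C₀(Ω, 𝒜)` and `C₀(Ω, ℬ)`.
-/

open Set

noncomputable def unitBallExcess {X : Type*} [NormedAddCommGroup X] (A B : Set X) : ℝ :=
  ⨆ x : ↥(A ∩ closedBall (0 : X) 1), infDist (x : X) (B ∩ closedBall (0 : X) 1)

theorem dKK_eq_max_unitBallExcess {X : Type*} [NormedAddCommGroup X] (A B : Set X) :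
    dKK A B = max (unitBallExcess A B) (unitBallExcess B A) :=
  rfl

theorem infDist_inter_closedBall_le_one {X : Type*} [NormedAddCommGroup X] {B : Set X}
    (hB : (0 : X) ∈ B) {x : X} (hx : x ∈ closedBall (0 : X) 1) :
    infDist x (B ∩ closedBall (0 : X) 1) ≤ 1 :=
  (infDist_le_dist_of_mem (x := x) (mem_inter hB (mem_closedBall_self zero_le_one))).trans
    (mem_closedBall.1 hx)

theorem unitBallExcess_nonneg {X : Type*} [NormedAddCommGroup X] (A B : Set X) :
    0 ≤ unitBallExcess A B :=
  Real.iSup_nonneg fun _ => infDist_nonneg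

theorem le_unitBallExcess {X : Type*} [NormedAddCommGroup X] {A B : Set X} (hB : (0 : X) ∈ B)
    {x : X} (hx : x ∈ A ∩ closedBall (0 : X) 1) :
    infDist x (B ∩ closedBall (0 : X) 1) ≤ unitBallExcess A B :=
  le_ciSup (f := fun y : ↥(A ∩ closedBall (0 : X) 1) => infDist (y : X) (B ∩ closedBall 0 1))
    ⟨1, forall_mem_range.2 fun y => infDist_inter_closedBall_le_one hB y.2.2⟩ ⟨x, hx⟩

namespace ZeroAtInftyContinuousMap

variable {Ω E : Type*} [TopologicalSpace Ω] [NormedAddCommGroup E]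

theorem norm_apply_le (f : C₀(Ω, E)) (t : Ω) : ‖f t‖ ≤ ‖f‖ :=
  f.toBCF.norm_coe_le_norm t

theorem dist_apply_le (f g : C₀(Ω, E)) (t : Ω) : dist (f t) (g t) ≤ dist f g :=
  BoundedContinuousFunction.dist_coe_le_dist (f := f.toBCF) (g := g.toBCF) t

end ZeroAtInftyContinuousMap

section c0ValIn

variable {Ω E : Type*} [TopologicalSpace Ω] [NormedAddCommGroup E]

theorem zero_mem_c0ValIn {B : Set E} (hB : (0 : E) ∈ B) : (0 : C₀(Ω, E)) ∈ c0ValIn B :=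
  fun _ => hB

theorem infDist_apply_le_infDist_c0ValIn {B : Set E} (hB : (0 : E) ∈ B) (f : C₀(Ω, E)) (t : Ω) :
    infDist (f t) (B ∩ closedBall (0 : E) 1) ≤
      infDist f (c0ValIn B ∩ closedBall (0 : C₀(Ω, E)) 1) := by
  refine (le_infDist ⟨0, mem_inter (zero_mem_c0ValIn hB) (mem_closedBall_self zero_le_one)⟩).2 ?_
  rintro g ⟨hgB, hg⟩
  have hgt : g t ∈ B ∩ closedBall (0 : E) 1 :=
    ⟨hgB t, mem_closedBall_zero_iff.2 <|
      (g.norm_apply_le t).trans (mem_closedBall_zero_iff.1 hg)⟩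
  exact (infDist_le_dist_of_mem hgt).trans (f.dist_apply_le g t)

theorem exists_mem_c0ValIn_apply_eq [LocallyCompactSpace Ω] [RegularSpace Ω] [NormedSpace ℝ E]
    {A : Set E} (hA : StarConvex ℝ 0 A) {a : E} (ha : a ∈ A) (t₀ : Ω) :
    ∃ f ∈ c0ValIn (Ω := Ω) A, f t₀ = a ∧ ‖f‖ ≤ ‖a‖ := by
  obtain ⟨φ, hφ₁, -, hφc, hφ⟩ :=
    exists_continuous_one_zero_of_isCompact (isCompact_singleton (x := t₀)) isClosed_empty
      (disjoint_empty _)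
  have hsupp : HasCompactSupport fun t => φ t • a := hφc.smul_right (f' := fun _ => a)
  let f : C₀(Ω, E) := ⟨⟨fun t => φ t • a, φ.continuous.smul continuous_const⟩,
    hsupp.is_zero_at_infty⟩
  refine ⟨f, fun t => starConvex_zero_iff.1 hA ha (hφ t).1 (hφ t).2, ?_, ?_⟩
  · simp [f, hφ₁ (mem_singleton t₀)]
  · rw [← ZeroAtInftyContinuousMap.norm_toBCF_eq_norm]
    refine (BoundedContinuousFunction.norm_le (norm_nonneg a)).2 fun t => ?_
    change ‖φ t • a‖ ≤ ‖a‖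
    rw [norm_smul, Real.norm_of_nonneg (hφ t).1]
    exact mul_le_of_le_one_left (norm_nonneg a) (hφ t).2

theorem unitBallExcess_le_unitBallExcess_c0ValIn (Ω : Type*) [TopologicalSpace Ω]
    [LocallyCompactSpace Ω] [RegularSpace Ω] [Nonempty Ω] [NormedSpace ℝ E] {A B : Set E}
    (hA : StarConvex ℝ 0 A) (hB : (0 : E) ∈ B) :
    unitBallExcess A B ≤ unitBallExcess (c0ValIn (Ω := Ω) A) (c0ValIn (Ω := Ω) B) := by
  obtain ⟨t₀⟩ := ‹Nonempty Ω›
  refine Real.iSup_le (fun ⟨a, haA, ha⟩ => ?_) (unitBallExcess_nonneg _ _)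
  obtain ⟨f, hfA, rfl, hf⟩ := exists_mem_c0ValIn_apply_eq hA haA t₀
  have hf₁ : f ∈ closedBall (0 : C₀(Ω, E)) 1 :=
    mem_closedBall_zero_iff.2 (hf.trans (mem_closedBall_zero_iff.1 ha))
  exact (infDist_apply_le_infDist_c0ValIn hB f t₀).trans
    (le_unitBallExcess (zero_mem_c0ValIn hB) ⟨hfA, hf₁⟩)

end c0ValIn

theorem NonUnitalStarSubalgebra.starConvex_zero {C : Type*} [NonUnitalNormedRing C] [Star C]
    [NormedSpace ℂ C] (S : NonUnitalStarSubalgebra ℂ C) : StarConvex ℝ 0 (S : Set C) :=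
  (S.toNonUnitalSubalgebra.toSubmodule.restrictScalars ℝ).starConvex

theorem dKK_le_dKK_c0_of_finiteDimensional_general
    {C : Type*} [NonUnitalNormedRing C] [StarRing C] [NormedSpace ℂ C]
    (Ω : Type*) [TopologicalSpace Ω] [LocallyCompactSpace Ω] [T2Space Ω] [Nonempty Ω]
    (A B : NonUnitalStarSubalgebra ℂ C) :
    dKK (A : Set C) (B : Set C) ≤
      dKK (c0ValIn (Ω := Ω) (A : Set C)) (c0ValIn (Ω := Ω) (B : Set C)) := by
  simp only [dKK_eq_max_unitBallExcess]
  exact max_le_max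
    (unitBallExcess_le_unitBallExcess_c0ValIn Ω A.starConvex_zero B.zero_mem)
    (unitBallExcess_le_unitBallExcess_c0ValIn Ω B.starConvex_zero A.zero_mem)

/-- For finite-dimensional `*`-subalgebras `𝒜, ℬ` of a C*-algebra `𝒞` and a nonempty locally
compact Hausdorff space `Ω`, `d_KK(𝒜, ℬ) ≤ d_KK(C₀(Ω, 𝒜), C₀(Ω, ℬ))`. -/
theorem dKK_le_dKK_c0_of_finiteDimensional
    {C : Type*} [NonUnitalNormedRing C] [StarRing C] [CStarRing C] [NormedSpace ℂ C]
    [IsScalarTower ℂ C C] [SMulCommClass ℂ C C] [StarModule ℂ C] [CompleteSpace C]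
    (Ω : Type*) [TopologicalSpace Ω] [LocallyCompactSpace Ω] [T2Space Ω] [Nonempty Ω]
    (A B : NonUnitalStarSubalgebra ℂ C)
    [FiniteDimensional ℂ A] [FiniteDimensional ℂ B] :
    dKK (A : Set C) (B : Set C) ≤
      dKK (c0ValIn (Ω := Ω) (A : Set C)) (c0ValIn (Ω := Ω) (B : Set C)) :=
  dKK_le_dKK_c0_of_finiteDimensional_general Ω A B
end

section
/- Let 𝒞 be a C*-algebra, let 𝒜 and ℬ be C*-subalgebras of 𝒞, and let Ω be a locally compact Hausdorff space. Then d_KK(C₀(Ω, 𝒜), C₀(Ω, ℬ)) ≤ d_KK(𝒜, ℬ), where C₀(Ω, 𝒜) and C₀(Ω, ℬ) are viewed as C*-subalgebras of C₀(Ω, 𝒞). (Equivalently: for a commutative C*-algebra 𝒟, d_KK(𝒜 ⊗min 𝒟, ℬ ⊗min 𝒟) ≤ d_KK(𝒜, ℬ).) -/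
open Metric
open scoped ZeroAtInfty

/-!
Let `d = d_KK(𝒜, ℬ)`, `f` in the unit ball of `C₀(Ω, 𝒜)` and `ε > 0`. Outside a compact set
`S`, `f` is `ε`-small, and `S` carries a finite partition of unity `φᵢ` subordinate to
neighbourhoods of points `tᵢ` on which `f` varies by less than `ε`. Picking `bᵢ` in the unit
ball of `ℬ` with `‖f tᵢ - bᵢ‖ < d + ε`, the function `g = ∑ φᵢ • bᵢ` lies in the unit ball of
`C₀(Ω, ℬ)`, because that ball is convex, contains `0`, and `∑ φᵢ ≤ 1`; and `‖f - g‖ ≤ d + 2ε`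
pointwise.
-/

open Filter Set

theorem Convex.sum_smul_mem_of_zero_mem {𝕜 E ι : Type*} [Field 𝕜] [LinearOrder 𝕜]
    [IsStrictOrderedRing 𝕜] [AddCommGroup E] [Module 𝕜 E] {s : Finset ι} {w : ι → 𝕜} {b : ι → E}
    {K : Set E} (hK : Convex 𝕜 K) (h0 : (0 : E) ∈ K) (hw₀ : ∀ i ∈ s, 0 ≤ w i)
    (hw₁ : ∑ i ∈ s, w i ≤ 1) (hb : ∀ i ∈ s, b i ∈ K) :
    ∑ i ∈ s, w i • b i ∈ K := by
  rcases (Finset.sum_nonneg hw₀).eq_or_lt with hW | hW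
  · rw [Finset.sum_eq_zero fun i hi => by
      rw [(Finset.sum_eq_zero_iff_of_nonneg hw₀).mp hW.symm i hi, zero_smul]]
    exact h0
  · have hcm := hK.centerMass_mem hw₀ hW hb
    rw [Finset.centerMass] at hcm
    simpa only [smul_inv_smul₀ hW.ne'] using hK.smul_mem_of_zero_mem h0 hcm ⟨hW.le, hw₁⟩

theorem norm_sub_sum_smul_le {E ι : Type*} [SeminormedAddCommGroup E] [NormedSpace ℝ E]
    {s : Finset ι} {w : ι → ℝ} {b : ι → E} (x : E) {δ : ℝ} (hw₀ : ∀ i ∈ s, 0 ≤ w i)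
    (hw₁ : ∑ i ∈ s, w i ≤ 1) (hb : ∀ i ∈ s, w i ≠ 0 → ‖x - b i‖ ≤ δ) :
    ‖x - ∑ i ∈ s, w i • b i‖ ≤ (1 - ∑ i ∈ s, w i) * ‖x‖ + (∑ i ∈ s, w i) * δ := by
  have hsplit : x - ∑ i ∈ s, w i • b i
      = (1 - ∑ i ∈ s, w i) • x + ∑ i ∈ s, w i • (x - b i) := by
    simp only [smul_sub, Finset.sum_sub_distrib, ← Finset.sum_smul, sub_smul, one_smul]
    abel
  have hterm : ∀ i ∈ s, ‖w i • (x - b i)‖ ≤ w i * δ := fun i hi => by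
    rw [norm_smul, Real.norm_of_nonneg (hw₀ i hi)]
    rcases eq_or_ne (w i) 0 with h | h
    · simp [h]
    · exact mul_le_mul_of_nonneg_left (hb i hi h) (hw₀ i hi)
  calc ‖x - ∑ i ∈ s, w i • b i‖
      ≤ ‖(1 - ∑ i ∈ s, w i) • x‖ + ‖∑ i ∈ s, w i • (x - b i)‖ := hsplit ▸ norm_add_le _ _
    _ ≤ (1 - ∑ i ∈ s, w i) * ‖x‖ + ∑ i ∈ s, w i * δ := by
      rw [norm_smul, Real.norm_of_nonneg (sub_nonneg.mpr hw₁)]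
      exact add_le_add_right ((norm_sum_le _ _).trans (Finset.sum_le_sum hterm)) _
    _ = (1 - ∑ i ∈ s, w i) * ‖x‖ + (∑ i ∈ s, w i) * δ := by rw [Finset.sum_mul]

namespace ZeroAtInftyContinuousMap

variable {Ω : Type*} [TopologicalSpace Ω] {E : Type*}

theorem exists_partitionOfUnity_norm_sub_lt [LocallyCompactSpace Ω] [T2Space Ω]
    [SeminormedAddCommGroup E] (f : C₀(Ω, E)) {ε : ℝ} (hε : 0 < ε) :
    ∃ (K : Set Ω) (T : Finset Ω) (φ : PartitionOfUnity T Ω K), (∀ i, HasCompactSupport (φ i)) ∧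
      (∀ t ∉ K, ‖f t‖ < ε) ∧ ∀ i t, φ i t ≠ 0 → ‖f t - f i‖ < ε := by
  obtain ⟨K, hKc, hK⟩ := mem_cocompact.mp <|
    (tendsto_zero_iff_norm_tendsto_zero.mp (zero_at_infty f)).eventually (gt_mem_nhds hε)
  let U : Ω → Set Ω := fun p => {t | ‖f t - f p‖ < ε}
  have hU : ∀ p, IsOpen (U p) := fun p =>
    isOpen_lt ((f.continuous.sub continuous_const).norm) continuous_const
  obtain ⟨T, hT⟩ := hKc.elim_finite_subcover U hU fun p _ => mem_iUnion.mpr ⟨p, by simpa [U]⟩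
  rw [← iUnion_subtype (· ∈ T) (U ·)] at hT
  obtain ⟨φ, hφU, hφc⟩ := PartitionOfUnity.exists_isSubordinate_of_locallyFinite_t2space hKc
    (fun i : T => U i) (fun i => hU i) (locallyFinite_of_finite _) hT
  exact ⟨K, T, φ, hφc, fun t ht => hK ht, fun i t ht => hφU i (subset_tsupport _ ht)⟩

theorem exists_apply_eq_sum_smul [TopologicalSpace E] [AddCommMonoid E] [ContinuousAdd E]
    [Module ℝ E] [ContinuousSMul ℝ E] {ι : Type*} [Fintype ι] (φ : ι → C(Ω, ℝ))
    (hφ : ∀ i, HasCompactSupport (φ i)) (b : ι → E) :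
    ∃ g : C₀(Ω, E), ∀ t, g t = ∑ i, φ i t • b i := by
  refine ⟨∑ i, ⟨⟨fun t => φ i t • b i, by fun_prop⟩,
    ((hφ i).smul_right (f' := fun _ => b i)).is_zero_at_infty⟩, fun t => ?_⟩
  exact map_sum (⟨⟨fun g : C₀(Ω, E) => g t, rfl⟩, fun _ _ => rfl⟩ : C₀(Ω, E) →+ E) _ _

end ZeroAtInftyContinuousMap

theorem c0ValIn_inter_closedBall {Ω : Type*} [TopologicalSpace Ω] {E : Type*}
    [NormedAddCommGroup E] (A : Set E) {r : ℝ} (hr : 0 ≤ r) :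
    c0ValIn (Ω := Ω) A ∩ closedBall 0 r = c0ValIn (A ∩ closedBall 0 r) := by
  ext f
  simp only [c0ValIn, mem_inter_iff, mem_ofPred_eq, mem_closedBall_zero_iff, forall_and,
    ← ZeroAtInftyContinuousMap.norm_toBCF_eq_norm, BoundedContinuousFunction.norm_le hr]
  rfl

theorem infDist_c0ValIn_le {Ω : Type*} [TopologicalSpace Ω] [LocallyCompactSpace Ω] [T2Space Ω]
    {E : Type*} [NormedAddCommGroup E] [NormedSpace ℝ E] {K : Set E} (hK : Convex ℝ K)
    (h0 : (0 : E) ∈ K) {d : ℝ} (hd : 0 ≤ d) (f : C₀(Ω, E)) (hf : ∀ t, infDist (f t) K ≤ d) :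
    infDist f (c0ValIn K) ≤ d := by
  refine le_of_forall_pos_le_add fun ε hε => ?_
  obtain ⟨S, T, φ, hφc, hfS, hφf⟩ := f.exists_partitionOfUnity_norm_sub_lt (half_pos hε)
  have hb : ∀ i : T, ∃ b ∈ K, ‖f i - b‖ < d + ε / 2 := fun i => by
    simpa only [← dist_eq_norm] using
      (infDist_lt_iff ⟨0, h0⟩).mp ((hf i).trans_lt (lt_add_of_pos_right d (half_pos hε)))
  choose b hbK hbf using hb
  obtain ⟨g, hg⟩ := ZeroAtInftyContinuousMap.exists_apply_eq_sum_smul (fun i => φ i) hφc b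
  have hsum_le : ∀ t, ∑ i, φ i t ≤ 1 := fun t => by
    simpa only [finsum_eq_sum_of_fintype] using φ.sum_le_one t
  have hgK : g ∈ c0ValIn K := fun t => hg t ▸
    hK.sum_smul_mem_of_zero_mem h0 (fun i _ => φ.nonneg i t) (hsum_le t) fun i _ => hbK i
  refine (infDist_le_dist_of_mem hgK).trans ?_
  rw [dist_eq_norm, ← ZeroAtInftyContinuousMap.norm_toBCF_eq_norm]
  refine (BoundedContinuousFunction.norm_le (by positivity)).mpr fun t => ?_
  have hclose : ∀ i : T, φ i t ≠ 0 → ‖f t - b i‖ ≤ d + ε := fun i hi =>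
    calc ‖f t - b i‖ ≤ ‖f t - f i‖ + ‖f i - b i‖ := norm_sub_le_norm_sub_add_norm_sub _ _ _
      _ ≤ d + ε := by linarith [hφf i t hi, hbf i]
  have hest := norm_sub_sum_smul_le (f t) (fun i _ => φ.nonneg i t) (hsum_le t)
    fun i _ => hclose i
  rw [← hg] at hest
  refine hest.trans ?_
  by_cases ht : t ∈ S
  · have hsum_eq : ∑ i, φ i t = 1 := by
      simpa only [finsum_eq_sum_of_fintype] using φ.sum_eq_one ht
    rw [hsum_eq, sub_self, zero_mul, zero_add, one_mul]
  · -- off `S`, `‖f t‖ < ε / 2 ≤ d + ε`, so the bound is a convex combination of terms `≤ d + ε`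
    nlinarith [hfS t ht, hsum_le t]

section dKK

variable {X : Type*} [NormedAddCommGroup X] (A B : Set X)

theorem dKK_comm : dKK A B = dKK B A :=
  max_comm _ _

theorem dKK_nonneg : 0 ≤ dKK A B :=
  le_max_of_le_left (Real.iSup_nonneg fun _ => infDist_nonneg)

theorem infDist_le_dKK {x : X} (hx : x ∈ A ∩ closedBall 0 1) :
    infDist x (B ∩ closedBall 0 1) ≤ dKK A B := by
  have hbdd : BddAbove (range fun y : ↥(A ∩ closedBall (0 : X) 1) =>
      infDist (y : X) (B ∩ closedBall 0 1)) := by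
    refine ⟨2, forall_mem_range.mpr fun y => ?_⟩
    rcases (B ∩ closedBall (0 : X) 1).eq_empty_or_nonempty with hB | ⟨b, hb⟩
    · simp [hB]
    · calc infDist (y : X) (B ∩ closedBall 0 1) ≤ dist (y : X) b := infDist_le_dist_of_mem hb
        _ ≤ dist (y : X) 0 + dist b 0 := dist_triangle_right _ _ _
        _ ≤ 2 := by linarith [mem_closedBall.mp y.2.2, mem_closedBall.mp hb.2]
  exact (le_ciSup hbdd ⟨x, hx⟩).trans (le_max_left _ _)

variable {A B} in
theorem dKK_le {d : ℝ} (hd : 0 ≤ d)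
    (hAB : ∀ x ∈ A ∩ closedBall 0 1, infDist x (B ∩ closedBall 0 1) ≤ d)
    (hBA : ∀ y ∈ B ∩ closedBall 0 1, infDist y (A ∩ closedBall 0 1) ≤ d) :
    dKK A B ≤ d :=
  max_le (Real.iSup_le (fun x => hAB x x.2) hd) (Real.iSup_le (fun y => hBA y y.2) hd)

end dKK

theorem dKK_c0ValIn_le (Ω : Type*) [TopologicalSpace Ω] [LocallyCompactSpace Ω] [T2Space Ω]
    {E : Type*} [NormedAddCommGroup E] [NormedSpace ℝ E] {A B : Set E}
    (hA : Convex ℝ A) (hB : Convex ℝ B) (hA0 : (0 : E) ∈ A) (hB0 : (0 : E) ∈ B) :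
    dKK (c0ValIn (Ω := Ω) A) (c0ValIn B) ≤ dKK A B := by
  have key : ∀ {A B : Set E}, Convex ℝ B → (0 : E) ∈ B →
      ∀ f ∈ c0ValIn (Ω := Ω) A ∩ closedBall 0 1,
        infDist f (c0ValIn B ∩ closedBall 0 1) ≤ dKK A B := by
    intro A B hB hB0 f hf
    rw [c0ValIn_inter_closedBall _ zero_le_one] at hf ⊢
    exact infDist_c0ValIn_le (hB.inter (convex_closedBall 0 1))
      ⟨hB0, mem_closedBall_self zero_le_one⟩ (dKK_nonneg A B) f
      fun t => infDist_le_dKK A B (hf t)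
  exact dKK_le (dKK_nonneg _ _) (key hB hB0) (dKK_comm A B ▸ key hA hA0)

theorem dKK_c0_le_dKK_general
    {C : Type*} [NonUnitalNormedRing C] [StarRing C] [NormedSpace ℂ C]
    (Ω : Type*) [TopologicalSpace Ω] [LocallyCompactSpace Ω] [T2Space Ω]
    (A B : NonUnitalStarSubalgebra ℂ C) :
    dKK (c0ValIn (Ω := Ω) (A : Set C)) (c0ValIn (Ω := Ω) (B : Set C)) ≤
      dKK (A : Set C) (B : Set C) :=
  dKK_c0ValIn_le Ω (A.toNonUnitalSubalgebra.toSubmodule.restrictScalars ℝ).convex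
    (B.toNonUnitalSubalgebra.toSubmodule.restrictScalars ℝ).convex A.zero_mem B.zero_mem

/-- For C*-subalgebras `𝒜, ℬ` of a C*-algebra `𝒞` and a locally compact Hausdorff space `Ω`,
`d_KK(C₀(Ω, 𝒜), C₀(Ω, ℬ)) ≤ d_KK(𝒜, ℬ)`. -/
theorem dKK_c0_le_dKK
    {C : Type*} [NonUnitalNormedRing C] [StarRing C] [CStarRing C] [NormedSpace ℂ C]
    [IsScalarTower ℂ C C] [SMulCommClass ℂ C C] [StarModule ℂ C] [CompleteSpace C]
    (Ω : Type*) [TopologicalSpace Ω] [LocallyCompactSpace Ω] [T2Space Ω]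
    (A B : NonUnitalStarSubalgebra ℂ C)
    (hA : IsClosed (A : Set C)) (hB : IsClosed (B : Set C)) :
    dKK (c0ValIn (Ω := Ω) (A : Set C)) (c0ValIn (Ω := Ω) (B : Set C)) ≤
      dKK (A : Set C) (B : Set C) :=
  dKK_c0_le_dKK_general Ω A B
end

section
/- Let 𝒞 be a C*-algebra, let 𝒜 and ℬ be C*-subalgebras of 𝒞, and let Ω be a nonempty compact Hausdorff space. Then d₀(C(Ω, 𝒜), C(Ω, ℬ)) = d₀(𝒜, ℬ), where C(Ω, 𝒜) and C(Ω, ℬ) are viewed as C*-subalgebras of C(Ω, 𝒞). (Equivalently: for a commutative unital C*-algebra 𝒟, d₀(𝒜 ⊗min 𝒟, ℬ ⊗min 𝒟) = d₀(𝒜, ℬ).) -/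
/-!
Constant functions show that `C(Ω, 𝒜) ⊆_γ C(Ω, ℬ)` implies `𝒜 ⊆_γ ℬ`. Conversely, if `𝒜 ⊆_γ ℬ`
and `f` is in the unit ball of `C(Ω, 𝒜)`, every `f t` has a point of `ℬ` within `γ`, hence within
any `δ > γ` on a neighbourhood of `t`; gluing these constants with a partition of unity stays in
`ℬ` by convexity and gives `g ∈ C(Ω, ℬ)` with `‖f - g‖ ≤ δ`. Hence the admissible `γ` for the
function algebras are admissible for `𝒜, ℬ`, and every `δ` above an admissible `γ` for `𝒜, ℬ` is
admissible for the function algebras, so the two infima agree.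
-/

open Metric

/-- `A ⊆_γ B`: every element of the closed unit ball of `A` is within distance `γ` of `B`. -/
def nearIncl {X : Type*} [NormedAddCommGroup X] (A B : Set X) (γ : ℝ) : Prop :=
  ∀ x ∈ A ∩ closedBall (0 : X) 1, ∃ y ∈ B, ‖x - y‖ ≤ γ

/-- The Christensen distance `d₀`. -/
noncomputable def d0 {X : Type*} [NormedAddCommGroup X] (A B : Set X) : ℝ :=
  sInf {γ : ℝ | 0 < γ ∧ nearIncl A B γ ∧ nearIncl B A γ}

theorem csInf_eq_csInf_of_subset_of_forall_lt {S T : Set ℝ} (hT : BddBelow T) (hST : S ⊆ T)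
    (hTS : ∀ γ ∈ T, ∀ δ, γ < δ → δ ∈ S) : sInf S = sInf T := by
  rcases T.eq_empty_or_nonempty with rfl | ⟨γ₀, hγ₀⟩
  · rw [Set.subset_empty_iff.1 hST]
  have hS : S.Nonempty := ⟨γ₀ + 1, hTS γ₀ hγ₀ _ (lt_add_one γ₀)⟩
  refine le_antisymm ?_ (csInf_le_csInf hT hS hST)
  refine le_csInf ⟨γ₀, hγ₀⟩ fun γ hγ => le_of_forall_gt_imp_ge_of_dense fun δ hδ => ?_
  exact csInf_le (hT.mono hST) (hTS γ hγ δ hδ)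

theorem exists_continuous_forall_mem_ball_of_convex {Ω E : Type*} [TopologicalSpace Ω]
    [NormalSpace Ω] [ParacompactSpace Ω] [NormedAddCommGroup E] [NormedSpace ℝ E]
    {B : Set E} (hB : Convex ℝ B) (f : C(Ω, E)) {δ : ℝ} (h : ∀ t, ∃ b ∈ B, dist (f t) b < δ) :
    ∃ g : C(Ω, E), ∀ t, g t ∈ B ∩ ball (f t) δ := by
  refine exists_continuous_forall_mem_convex_of_local_const
    (fun t => hB.inter (convex_ball _ _)) fun t => ?_
  obtain ⟨b, hb, hbt⟩ := h t
  have hnear : ∀ᶠ s in nhds t, dist (f s) b < δ :=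
    (f.continuous.dist continuous_const).continuousAt.eventually_lt continuousAt_const hbt
  exact ⟨b, hnear.mono fun s hs => ⟨hb, mem_ball'.2 hs⟩⟩

namespace nearIncl

variable {Ω E : Type*} [TopologicalSpace Ω] [CompactSpace Ω] [NormedAddCommGroup E]
  {A B : Set E} {γ : ℝ}

theorem of_contValIn [Nonempty Ω] (h : nearIncl (contValIn (Ω := Ω) A) (contValIn B) γ) :
    nearIncl A B γ := by
  rintro x ⟨hxA, hx⟩
  rw [mem_closedBall_zero_iff] at hx
  have hconst : ContinuousMap.const Ω x ∈ contValIn A ∩ closedBall 0 1 :=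
    ⟨fun _ => hxA, mem_closedBall_zero_iff.2 ((ContinuousMap.norm_le_of_nonempty _).2 fun _ => hx)⟩
  obtain ⟨g, hgB, hg⟩ := h _ hconst
  let t₀ := Classical.arbitrary Ω
  refine ⟨g t₀, hgB t₀, ?_⟩
  simpa [← dist_eq_norm] using (ContinuousMap.dist_apply_le_dist t₀).trans hg

theorem contValIn_of_lt [T2Space Ω] [NormedSpace ℝ E] (hB : Convex ℝ B) (h : nearIncl A B γ)
    {δ : ℝ} (hγ : 0 ≤ γ) (hγδ : γ < δ) :
    nearIncl (contValIn (Ω := Ω) A) (contValIn B) δ := by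
  rintro f ⟨hfA, hf⟩
  rw [mem_closedBall_zero_iff] at hf
  have hpt : ∀ t, ∃ b ∈ B, dist (f t) b < δ := fun t => by
    have hft : f t ∈ A ∩ closedBall 0 1 :=
      ⟨hfA t, mem_closedBall_zero_iff.2 ((f.norm_coe_le_norm t).trans hf)⟩
    obtain ⟨b, hb, hfb⟩ := h _ hft
    exact ⟨b, hb, (dist_eq_norm _ _).trans_lt (hfb.trans_lt hγδ)⟩
  obtain ⟨g, hg⟩ := exists_continuous_forall_mem_ball_of_convex hB f hpt
  refine ⟨g, fun t => (hg t).1, (ContinuousMap.norm_le _ (by linarith)).2 fun t => ?_⟩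
  rw [ContinuousMap.sub_apply, ← dist_eq_norm]
  exact (mem_ball'.1 (hg t).2).le

end nearIncl

theorem d0_contMap_eq_d0_general
    {C : Type*} [NonUnitalNormedRing C] [StarRing C] [NormedSpace ℂ C]
    (Ω : Type*) [TopologicalSpace Ω] [CompactSpace Ω] [T2Space Ω] [Nonempty Ω]
    (A B : NonUnitalStarSubalgebra ℂ C) :
    d0 (contValIn (Ω := Ω) (A : Set C)) (contValIn (Ω := Ω) (B : Set C)) =
      d0 (A : Set C) (B : Set C) := by
  have hconvex (D : NonUnitalStarSubalgebra ℂ C) : Convex ℝ (D : Set C) :=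
    (D.toNonUnitalSubalgebra.toSubmodule.restrictScalars ℝ).convex
  refine csInf_eq_csInf_of_subset_of_forall_lt ⟨0, fun γ hγ => hγ.1.le⟩ ?_ ?_
  · rintro γ ⟨hγ, hAB, hBA⟩
    exact ⟨hγ, hAB.of_contValIn, hBA.of_contValIn⟩
  · rintro γ ⟨hγ, hAB, hBA⟩ δ hγδ
    exact ⟨hγ.trans hγδ, hAB.contValIn_of_lt (hconvex B) hγ.le hγδ,
      hBA.contValIn_of_lt (hconvex A) hγ.le hγδ⟩

/-- For C*-subalgebras `𝒜, ℬ` of a C*-algebra `𝒞` and a nonempty compact Hausdorff space `Ω`,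
`d₀(C(Ω, 𝒜), C(Ω, ℬ)) = d₀(𝒜, ℬ)`. -/
theorem d0_contMap_eq_d0
    {C : Type*} [NonUnitalNormedRing C] [StarRing C] [CStarRing C] [NormedSpace ℂ C]
    [IsScalarTower ℂ C C] [SMulCommClass ℂ C C] [StarModule ℂ C] [CompleteSpace C]
    (Ω : Type*) [TopologicalSpace Ω] [CompactSpace Ω] [T2Space Ω] [Nonempty Ω]
    (A B : NonUnitalStarSubalgebra ℂ C)
    (hA : IsClosed (A : Set C)) (hB : IsClosed (B : Set C)) :
    d0 (contValIn (Ω := Ω) (A : Set C)) (contValIn (Ω := Ω) (B : Set C)) =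
      d0 (A : Set C) (B : Set C) :=
  d0_contMap_eq_d0_general Ω A B
end

section
/- Let 𝒞 be a C*-algebra, let 𝒜 and ℬ be C*-subalgebras of 𝒞, and let Ω be a nonempty compact Hausdorff space. Then d_KK(C(Ω, 𝒜), C(Ω, ℬ)) = d_KK(𝒜, ℬ), where C(Ω, 𝒜) and C(Ω, ℬ) are viewed as C*-subalgebras of C(Ω, 𝒞). (Equivalently: for a commutative unital C*-algebra 𝒟, d_KK(𝒜 ⊗min 𝒟, ℬ ⊗min 𝒟) = d_KK(𝒜, ℬ).) -/
/-!
The unit ball of `C(Ω, 𝒜)` is `C(Ω, B₁(𝒜))`. Constant functions embed `B₁(𝒜)` into it and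
evaluation at a point is 1-Lipschitz, which gives `≥`. For `≤`: if every value of
`f ∈ C(Ω, B₁(𝒜))` lies within `r` of the convex set `B₁(ℬ)`, points of `B₁(ℬ)` chosen locally
near `f` glue, by a partition of unity, to `g ∈ C(Ω, B₁(ℬ))` with `‖f - g‖ ≤ r`.
-/

open Metric

open Bornology

theorem bddAbove_range_infDist {X : Type*} [PseudoMetricSpace X] {S T : Set X}
    (hS : IsBounded S) (hT : T.Nonempty) :
    BddAbove (Set.range fun x : S => infDist (x : X) T) := by
  obtain ⟨b, hb⟩ := hT
  obtain ⟨R, hR⟩ := hS.subset_closedBall b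
  exact ⟨R, Set.forall_mem_range.2 fun x => (infDist_le_dist_of_mem hb).trans (hR x.2)⟩

section ContValIn

variable {Ω : Type*} [TopologicalSpace Ω]

@[simp]
theorem mem_contValIn {X : Type*} [TopologicalSpace X] {S : Set X} {f : C(Ω, X)} :
    f ∈ contValIn S ↔ ∀ t, f t ∈ S :=
  Iff.rfl

theorem Set.Nonempty.contValIn {X : Type*} [TopologicalSpace X] {S : Set X} (hS : S.Nonempty) :
    (contValIn (Ω := Ω) S).Nonempty :=
  let ⟨x, hx⟩ := hS
  ⟨ContinuousMap.const Ω x, mem_contValIn.2 fun _ => hx⟩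

variable [CompactSpace Ω]

theorem infDist_le_infDist_const_contValIn {X : Type*} [PseudoMetricSpace X] [Nonempty Ω]
    {T : Set X} (hT : T.Nonempty) (x : X) :
    infDist x T ≤ infDist (ContinuousMap.const Ω x) (contValIn T) := by
  refine (le_infDist hT.contValIn).2 fun g hg => ?_
  obtain ⟨t⟩ := ‹Nonempty Ω›
  exact (infDist_le_dist_of_mem (mem_contValIn.1 hg t)).trans
    (ContinuousMap.dist_apply_le_dist (f := ContinuousMap.const Ω x) t)

variable {E : Type*} [NormedAddCommGroup E]

theorem contValIn_inter_closedBall (S : Set E) :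
    contValIn (Ω := Ω) S ∩ closedBall 0 1 = contValIn (S ∩ closedBall 0 1) := by
  ext f
  simp only [Set.mem_inter_iff, mem_contValIn, mem_closedBall_zero_iff,
    ContinuousMap.norm_le f zero_le_one, forall_and]

theorem isBounded_contValIn {S : Set E} (hS : IsBounded S) :
    IsBounded (contValIn (Ω := Ω) S) := by
  obtain ⟨R, hR⟩ := isBounded_iff_forall_norm_le.1 hS
  exact isBounded_iff_forall_norm_le.2 ⟨max R 0, fun f hf =>
    (ContinuousMap.norm_le f (le_max_right R 0)).2 fun t =>
      (hR _ (mem_contValIn.1 hf t)).trans (le_max_left R 0)⟩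

variable [T2Space Ω] [Nonempty Ω] [NormedSpace ℝ E]

theorem infDist_contValIn_le {T : Set E} (hT : Convex ℝ T) (hTne : T.Nonempty) (f : C(Ω, E))
    {r : ℝ} (hr : ∀ t, infDist (f t) T < r) : infDist f (contValIn T) ≤ r := by
  obtain ⟨g, hg⟩ := exists_continuous_forall_mem_convex_of_local_const
    (t := fun t => T ∩ ball (f t) r) (fun t => hT.inter (convex_ball _ _)) fun t => by
      obtain ⟨c, hcT, hc⟩ := (infDist_lt_iff hTne).1 (hr t)
      exact ⟨c, ((f.continuous.dist continuous_const).continuousAt.eventually_lt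
        continuousAt_const hc).mono fun u hu => ⟨hcT, mem_ball'.2 hu⟩⟩
  obtain ⟨t⟩ := ‹Nonempty Ω›
  have hr0 : 0 ≤ r := infDist_nonneg.trans (hr t).le
  exact (infDist_le_dist_of_mem (mem_contValIn.2 fun u => (hg u).1)).trans
    ((ContinuousMap.dist_le hr0).2 fun u => (mem_ball'.1 (hg u).2).le)

theorem iSup_infDist_contValIn_eq {S T : Set E} (hS : IsBounded S) (hT : Convex ℝ T)
    (hTne : T.Nonempty) :
    ⨆ f : contValIn (Ω := Ω) S, infDist (f : C(Ω, E)) (contValIn T) =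
      ⨆ x : S, infDist (x : E) T := by
  refine le_antisymm (Real.iSup_le (fun f => ?_) (Real.iSup_nonneg fun _ => infDist_nonneg))
    (Real.iSup_le (fun x => ?_) (Real.iSup_nonneg fun _ => infDist_nonneg))
  · refine le_of_forall_gt_imp_ge_of_dense fun r hr => infDist_contValIn_le hT hTne f.1 fun t => ?_
    exact (le_ciSup (bddAbove_range_infDist hS hTne) ⟨f.1 t, mem_contValIn.1 f.2 t⟩).trans_lt hr
  · exact (infDist_le_infDist_const_contValIn hTne x).trans
      (le_ciSup (bddAbove_range_infDist (isBounded_contValIn hS) hTne.contValIn)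
        ⟨ContinuousMap.const Ω x, mem_contValIn.2 fun _ => x.2⟩)

end ContValIn

theorem dKK_contMap_eq_dKK_general
    {C : Type*} [NonUnitalNormedRing C] [StarRing C] [NormedSpace ℂ C]
    (Ω : Type*) [TopologicalSpace Ω] [CompactSpace Ω] [T2Space Ω] [Nonempty Ω]
    (A B : NonUnitalStarSubalgebra ℂ C) :
    dKK (contValIn (Ω := Ω) (A : Set C)) (contValIn (Ω := Ω) (B : Set C)) =
      dKK (A : Set C) (B : Set C) := by
  have hbdd (D : NonUnitalStarSubalgebra ℂ C) : IsBounded ((D : Set C) ∩ closedBall 0 1) :=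
    isBounded_closedBall.subset Set.inter_subset_right
  have hconv (D : NonUnitalStarSubalgebra ℂ C) : Convex ℝ ((D : Set C) ∩ closedBall 0 1) :=
    (D.toNonUnitalSubalgebra.toSubmodule.restrictScalars ℝ).convex.inter (convex_closedBall 0 1)
  have hne (D : NonUnitalStarSubalgebra ℂ C) : ((D : Set C) ∩ closedBall 0 1).Nonempty :=
    ⟨0, D.zero_mem, mem_closedBall_self zero_le_one⟩
  rw [dKK, dKK, contValIn_inter_closedBall, contValIn_inter_closedBall,
    iSup_infDist_contValIn_eq (hbdd A) (hconv B) (hne B),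
    iSup_infDist_contValIn_eq (hbdd B) (hconv A) (hne A)]

/-- For C*-subalgebras `𝒜, ℬ` of a C*-algebra `𝒞` and a nonempty compact Hausdorff space `Ω`,
`d_KK(C(Ω, 𝒜), C(Ω, ℬ)) = d_KK(𝒜, ℬ)`. -/
theorem dKK_contMap_eq_dKK
    {C : Type*} [NonUnitalNormedRing C] [StarRing C] [CStarRing C] [NormedSpace ℂ C]
    [IsScalarTower ℂ C C] [SMulCommClass ℂ C C] [StarModule ℂ C] [CompleteSpace C]
    (Ω : Type*) [TopologicalSpace Ω] [CompactSpace Ω] [T2Space Ω] [Nonempty Ω]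
    (A B : NonUnitalStarSubalgebra ℂ C)
    (hA : IsClosed (A : Set C)) (hB : IsClosed (B : Set C)) :
    dKK (contValIn (Ω := Ω) (A : Set C)) (contValIn (Ω := Ω) (B : Set C)) =
      dKK (A : Set C) (B : Set C) :=
  dKK_contMap_eq_dKK_general Ω A B
end
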